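/- arXiv:1704.01223 — 4 statements merged into one kernel-verified Lean document; each statement's English description precedes it below -/
import Mathlib

section
/- For the optimal interpolator L* = H Σ C^T (C(Σ + Λ_w)C^T)^{-1}, the error covariance admits the closed form K(L*) = H V_K (Λ^{-1} + Σ_{i∈S} λ_{w,i}^{-1} v_i v_i^H)^{-1} V_K^H H^H. -/
/-!
`K` is a quadratic in `L`; at the gain `L* = G M⁻¹`, with `G = H Σ Cᵀ` and `M = C (Σ + Λ_w) Cᵀ`,
it collapses to the Schur complement `H Σ Hᴴ - G M⁻¹ Gᴴ`. Writing `Σ = V_K Λ V_Kᴴ` and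
`W = C V_K`, this is `H V_K (Λ - Λ Wᴴ (W Λ Wᴴ + D)⁻¹ W Λ) V_Kᴴ Hᴴ` with `D = C Λ_w Cᵀ`, and the
Woodbury identity turns the middle factor into `(Λ⁻¹ + Wᴴ D⁻¹ W)⁻¹`. Since `C` selects rows,
`D` is the diagonal of the `λ_{w,i}`, `i ∈ S`, the rows of `W` are the `v_iᴴ`, `i ∈ S`, and
`Wᴴ D⁻¹ W = ∑_{i ∈ S} λ_{w,i}⁻¹ v_i v_iᴴ`.
-/

open Matrix Finset ComplexOrder

theorem Finset.sum_orderIsoOfFin {ι M : Type*} [LinearOrder ι] [AddCommMonoid M] (s : Finset ι)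
    {k : ℕ} (h : s.card = k) (f : ι → M) : ∑ a, f (s.orderIsoOfFin h a) = ∑ i ∈ s, f i := by
  rw [← Finset.sum_coe_sort s]
  exact (s.orderIsoOfFin h).toEquiv.sum_comp (fun i => f i)

namespace Matrix

variable {l m n p k α : Type*}

section Selection

variable [NonAssocSemiring α] [DecidableEq n]

theorem one_submatrix_mul_eq_submatrix [Fintype n] (σ : p → n) (A : Matrix n l α) :
    (1 : Matrix n n α).submatrix σ id * A = A.submatrix σ id := by
  simpa using one_submatrix_mul σ (Equiv.refl n) A

theorem mul_one_submatrix_eq_submatrix [Fintype n] (σ : p → n) (A : Matrix l n α) :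
    A * (1 : Matrix n n α).submatrix id σ = A.submatrix id σ := by
  simpa using mul_submatrix_one (Equiv.refl n) σ A

theorem one_submatrix_mul_mul_transpose [Fintype n] (σ : p → n) (A : Matrix n n α) :
    (1 : Matrix n n α).submatrix σ id * A * ((1 : Matrix n n α).submatrix σ id)ᵀ =
      A.submatrix σ σ := by
  rw [transpose_submatrix, transpose_one, one_submatrix_mul_eq_submatrix,
    mul_one_submatrix_eq_submatrix, submatrix_submatrix]
  rfl

theorem conjTranspose_one_submatrix [StarRing α] (σ : p → n) :
    ((1 : Matrix n n α).submatrix σ id)ᴴ = ((1 : Matrix n n α).submatrix σ id)ᵀ := by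
  rw [conjTranspose_submatrix, transpose_submatrix, conjTranspose_one, transpose_one]

end Selection

theorem conjTranspose_mul_diagonal_mul_eq_sum_vecMulVec [CommSemiring α] [StarRing α] [Fintype p]
    [DecidableEq p] (v : p → l → α) (d : p → α) :
    (of fun a j => star (v a j))ᴴ * diagonal d * (of fun a j => star (v a j)) =
      ∑ a, d a • vecMulVec (v a) (star (v a)) := by
  ext x y
  rw [mul_apply]
  simp only [mul_diagonal, sum_apply, smul_apply, vecMulVec_apply, conjTranspose_apply, of_apply,
    star_star, Pi.star_apply, smul_eq_mul]
  exact Finset.sum_congr rfl fun a _ => by ring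

theorem inv_diagonal_of_ne_zero [Fintype p] [DecidableEq p] [Field α] {d : p → α}
    (hd : ∀ a, d a ≠ 0) : (diagonal d)⁻¹ = diagonal fun a => (d a)⁻¹ :=
  inv_eq_left_inv <| by simp [diagonal_mul_diagonal, hd]

theorem inv_inv_add_mul_inv_mul_eq_sub [CommRing α] [Fintype p] [DecidableEq p] [Fintype k]
    [DecidableEq k] (Λ : Matrix k k α) (U : Matrix k p α) (D : Matrix p p α) (W : Matrix p k α)
    (hΛ : IsUnit Λ) (hD : IsUnit D) (hM : IsUnit (W * Λ * U + D)) :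
    (Λ⁻¹ + U * D⁻¹ * W)⁻¹ = Λ - Λ * U * (W * Λ * U + D)⁻¹ * W * Λ := by
  have hΛ' : Λ⁻¹⁻¹ = Λ := nonsing_inv_nonsing_inv Λ ((isUnit_iff_isUnit_det Λ).1 hΛ)
  have hD' : D⁻¹⁻¹ = D := nonsing_inv_nonsing_inv D ((isUnit_iff_isUnit_det D).1 hD)
  rw [add_mul_mul_inv_eq_sub _ _ _ _ (isUnit_nonsing_inv_iff.2 hΛ) (isUnit_nonsing_inv_iff.2 hD)
    (by rwa [hΛ', hD', add_comm]), hΛ', hD', add_comm D]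

section ErrorCovariance

variable [CommRing α] [StarRing α] [Fintype p] [DecidableEq p]

/-- The paper's `K(L)`, with `P = H Σ Hᴴ`, `G = H Σ Cᵀ` and `M = C (Σ + Λ_w) Cᵀ`. -/
def errorCovariance (P : Matrix m m α) (G : Matrix m p α) (M : Matrix p p α)
    (L : Matrix m p α) : Matrix m m α :=
  P - L * Gᴴ - G * Lᴴ + L * M * Lᴴ

theorem errorCovariance_mul_inv (P : Matrix m m α) (G : Matrix m p α) {M : Matrix p p α}
    (hM : M.IsHermitian) (hdet : IsUnit M.det) :
    errorCovariance P G M (G * M⁻¹) = P - G * M⁻¹ * Gᴴ := by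
  have hL : (G * M⁻¹)ᴴ = M⁻¹ * Gᴴ := by
    rw [conjTranspose_mul, conjTranspose_nonsing_inv, hM.eq]
  rw [errorCovariance, hL, nonsing_inv_mul_cancel_right _ _ hdet]
  simp only [Matrix.mul_assoc]
  abel

theorem errorCovariance_mul_inv_eq_inv_add [Fintype n] [Fintype k] [DecidableEq k]
    (H : Matrix m n α) (V : Matrix n k α) (C : Matrix p n α) {Λ : Matrix k k α}
    {R : Matrix n n α} (hΛ : Λ.IsHermitian) (hR : R.IsHermitian) (hΛu : IsUnit Λ)
    (hD : IsUnit (C * R * Cᴴ)) (hM : IsUnit (C * (V * Λ * Vᴴ + R) * Cᴴ)) :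
    errorCovariance (H * (V * Λ * Vᴴ) * Hᴴ) (H * (V * Λ * Vᴴ) * Cᴴ) (C * (V * Λ * Vᴴ + R) * Cᴴ)
        (H * (V * Λ * Vᴴ) * Cᴴ * (C * (V * Λ * Vᴴ + R) * Cᴴ)⁻¹) =
      H * V * (Λ⁻¹ + (C * V)ᴴ * (C * R * Cᴴ)⁻¹ * (C * V))⁻¹ * Vᴴ * Hᴴ := by
  have hMeq : C * (V * Λ * Vᴴ + R) * Cᴴ = C * V * Λ * (C * V)ᴴ + C * R * Cᴴ := by
    simp only [Matrix.mul_add, Matrix.add_mul, conjTranspose_mul, Matrix.mul_assoc]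
  have hMh : (C * (V * Λ * Vᴴ + R) * Cᴴ).IsHermitian :=
    isHermitian_mul_mul_conjTranspose C ((isHermitian_mul_mul_conjTranspose V hΛ).add hR)
  rw [errorCovariance_mul_inv _ _ hMh ((isUnit_iff_isUnit_det _).1 hM),
    inv_inv_add_mul_inv_mul_eq_sub _ _ _ _ hΛu hD (hMeq ▸ hM), ← hMeq]
  simp only [conjTranspose_mul, conjTranspose_conjTranspose, hΛ.eq, Matrix.mul_assoc,
    Matrix.mul_sub, Matrix.sub_mul]

end ErrorCovariance

end Matrix

/-- For the optimal interpolator `L* = H Σ Cᵀ (C (Σ + Λ_w) Cᵀ)⁻¹`, the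
error covariance admits the closed form
`K(L*) = H V_K (Λ⁻¹ + ∑_{i∈S} λ_{w,i}⁻¹ v_i v_iᴴ)⁻¹ V_Kᴴ Hᴴ`. -/
theorem optimal_error_covariance_closed_form
    (n k m p : ℕ)
    (v : Fin n → Fin k → ℂ)
    (H : Matrix (Fin m) (Fin n) ℂ)
    (lam : Fin k → ℝ) (hlam : ∀ j, 0 < lam j)
    (lw : Fin n → ℝ) (hlw : ∀ i, 0 < lw i)
    (VKmat : Matrix (Fin n) (Fin k) ℂ)
    (hVK : VKmat = Matrix.of fun i j => star (v i j))
    (Sig : Matrix (Fin n) (Fin n) ℂ)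
    (hSig : Sig = VKmat * Matrix.diagonal (fun j => (lam j : ℂ)) * VKmatᴴ)
    (Lw : Matrix (Fin n) (Fin n) ℂ)
    (hLw : Lw = Matrix.diagonal (fun i => (lw i : ℂ)))
    (S : Finset (Fin n)) (hS : S.card = p)
    (C : Matrix (Fin p) (Fin n) ℂ)
    (hC : C = (1 : Matrix (Fin n) (Fin n) ℂ).submatrix
      (fun i => ((S.orderIsoOfFin hS i : Fin n))) id)
    (K : Matrix (Fin m) (Fin p) ℂ → Matrix (Fin m) (Fin m) ℂ)
    (hK : ∀ L, K L = H * Sig * Hᴴ - L * C * Sig * Hᴴ - H * Sig * Cᵀ * Lᴴ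
        + L * C * (Sig + Lw) * Cᵀ * Lᴴ) :
    K (H * Sig * Cᵀ * (C * (Sig + Lw) * Cᵀ)⁻¹) =
      H * VKmat *
        ((Matrix.diagonal fun j => (lam j : ℂ))⁻¹ +
          ∑ i ∈ S, ((lw i : ℂ))⁻¹ • Matrix.vecMulVec (v i) (star (v i)))⁻¹ *
        VKmatᴴ * Hᴴ := by
  set σ : Fin p → Fin n := fun a => S.orderIsoOfFin hS a
  have hσ : σ.Injective := Subtype.val_injective.comp (S.orderIsoOfFin hS).injective
  have hCt : Cᵀ = Cᴴ := by rw [hC, conjTranspose_one_submatrix]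
  have hD : C * Lw * Cᴴ = diagonal fun a => (lw (σ a) : ℂ) := by
    rw [hLw, ← hCt, hC, one_submatrix_mul_mul_transpose, submatrix_diagonal _ _ hσ]
    rfl
  have hΛ : (diagonal fun j => (lam j : ℂ)).PosDef :=
    PosDef.diagonal fun j => by exact_mod_cast hlam j
  have hLwpd : Lw.PosDef := hLw ▸ PosDef.diagonal fun i => by exact_mod_cast hlw i
  have hDpd : (C * Lw * Cᴴ).PosDef := hD ▸ PosDef.diagonal fun a => by exact_mod_cast hlw (σ a)
  have hSigpsd : Sig.PosSemidef := hSig ▸ hΛ.posSemidef.mul_mul_conjTranspose_same VKmat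
  have hMpd : (C * (Sig + Lw) * Cᴴ).PosDef := by
    rw [Matrix.mul_add, Matrix.add_mul]
    exact PosDef.posSemidef_add (hSigpsd.mul_mul_conjTranspose_same C) hDpd
  have hsum : ∑ i ∈ S, ((lw i : ℂ))⁻¹ • vecMulVec (v i) (star (v i)) =
      (C * VKmat)ᴴ * (C * Lw * Cᴴ)⁻¹ * (C * VKmat) := by
    rw [hD, inv_diagonal_of_ne_zero fun a => by exact_mod_cast (hlw (σ a)).ne', hC,
      one_submatrix_mul_eq_submatrix, hVK, ← Finset.sum_orderIsoOfFin S hS]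
    exact (conjTranspose_mul_diagonal_mul_eq_sum_vecMulVec _ _).symm
  have hK' : ∀ L, K L = errorCovariance (H * Sig * Hᴴ) (H * Sig * Cᴴ) (C * (Sig + Lw) * Cᴴ) L := by
    intro L
    rw [hK, errorCovariance, hCt]
    simp only [conjTranspose_mul, conjTranspose_conjTranspose, hSigpsd.isHermitian.eq,
      Matrix.mul_assoc]
  rw [hK', hsum, hCt, hSig]
  exact errorCovariance_mul_inv_eq_inv_add H VKmat C hΛ.isHermitian hLwpd.isHermitian hΛ.isUnit
    hDpd.isUnit (hSig ▸ hMpd.isUnit)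
end

section
/- The scalar set function MSE(S) = trace(K*(S)) is monotone decreasing: for all subsets A ⊆ B ⊆ {1,…,n}, MSE(A) ≥ MSE(B). -/
open Matrix Finset ComplexOrder

/-- The matrix `M(S) = Λ⁻¹ + ∑_{i ∈ S} λ_{w,i}⁻¹ v_i v_iᴴ`. -/
noncomputable def Mmat {n k : ℕ} (lam : Fin k → ℝ) (lw : Fin n → ℝ)
    (v : Fin n → Fin k → ℂ) (S : Finset (Fin n)) : Matrix (Fin k) (Fin k) ℂ :=
  (Matrix.diagonal fun j => (lam j : ℂ))⁻¹ +
    ∑ i ∈ S, ((lw i : ℂ))⁻¹ • Matrix.vecMulVec (v i) (star (v i))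

/-- The matrix `V_K` whose `i`-th row is `v_iᴴ`. -/
noncomputable def VKmat {n k : ℕ} (v : Fin n → Fin k → ℂ) : Matrix (Fin n) (Fin k) ℂ :=
  Matrix.of fun i j => star (v i j)

/-- The optimal interpolation error covariance `K*(S) = H V_K M(S)⁻¹ V_Kᴴ Hᴴ`. -/
noncomputable def Kstar {n k m : ℕ} (lam : Fin k → ℝ) (lw : Fin n → ℝ)
    (v : Fin n → Fin k → ℂ) (H : Matrix (Fin m) (Fin n) ℂ) (S : Finset (Fin n)) :
    Matrix (Fin m) (Fin m) ℂ :=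
  H * VKmat v * (Mmat lam lw v S)⁻¹ * (VKmat v)ᴴ * Hᴴ

/-- The interpolation mean-square error `MSE(S) = trace K*(S)`, a (nonnegative) real. -/
noncomputable def MSE {n k m : ℕ} (lam : Fin k → ℝ) (lw : Fin n → ℝ)
    (v : Fin n → Fin k → ℂ) (H : Matrix (Fin m) (Fin n) ℂ) (S : Finset (Fin n)) : ℝ :=
  ((Kstar lam lw v H S).trace).re

/-! Everything is monotonicity in the Loewner order: adding the terms `λ_{w,i}⁻¹ v_i v_iᴴ`
increases `M(S)`, inversion is operator antitone on positive definite matrices, and the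
congruence `X ↦ (H V_K) X (H V_K)ᴴ` and the trace are monotone. -/

open scoped MatrixOrder

namespace Matrix

variable {ι κ : Type*} [Fintype ι]

open scoped Norms.L2Operator in
theorem PosDef.inv_le_inv_of_le [DecidableEq ι] {A B : Matrix ι ι ℂ} (hA : A.PosDef)
    (hAB : A ≤ B) : B⁻¹ ≤ A⁻¹ := by
  simpa only [nonsing_inv_eq_ringInverse] using
    CStarAlgebra.ringInverse_le_ringInverse hAB hA.isStrictlyPositive

theorem mul_mul_conjTranspose_le_mul_mul_conjTranspose [Fintype κ] {A B : Matrix ι ι ℂ}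
    (hAB : A ≤ B) (C : Matrix κ ι ℂ) : C * A * Cᴴ ≤ C * B * Cᴴ := by
  rw [le_iff] at hAB ⊢
  simpa only [Matrix.mul_sub, Matrix.sub_mul] using hAB.mul_mul_conjTranspose_same C

theorem re_trace_le_re_trace {A B : Matrix ι ι ℂ} (hAB : A ≤ B) : A.trace.re ≤ B.trace.re := by
  have h := (le_iff.mp hAB).trace_nonneg
  rw [trace_sub, sub_nonneg] at h
  exact (Complex.le_def.mp h).1

theorem posSemidef_sum_inv_smul_vecMulVec_self_star {s : Finset κ} {w : κ → ℝ}
    (hw : ∀ i ∈ s, 0 ≤ w i) (v : κ → ι → ℂ) :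
    (∑ i ∈ s, ((w i : ℂ))⁻¹ • vecMulVec (v i) (star (v i))).PosSemidef := by
  refine posSemidef_sum s fun i hi => (posSemidef_vecMulVec_self_star (v i)).smul ?_
  rw [← Complex.ofReal_inv]
  exact Complex.zero_le_real.mpr (inv_nonneg.mpr (hw i hi))

end Matrix

variable {n k m : ℕ} {lam : Fin k → ℝ} {lw : Fin n → ℝ}

theorem Mmat_posDef (hlam : ∀ j, 0 < lam j) (hlw : ∀ i, 0 < lw i) (v : Fin n → Fin k → ℂ)
    (S : Finset (Fin n)) : (Mmat lam lw v S).PosDef := by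
  have hΛ : (diagonal fun j => (lam j : ℂ)).PosDef :=
    posDef_diagonal_iff.mpr fun j => Complex.zero_lt_real.mpr (hlam j)
  exact hΛ.inv.add_posSemidef <|
    posSemidef_sum_inv_smul_vecMulVec_self_star (fun i _ => (hlw i).le) v

theorem Mmat_mono (hlw : ∀ i, 0 < lw i) (v : Fin n → Fin k → ℂ) : Monotone (Mmat lam lw v) := by
  intro A B hAB
  have hdiff : Mmat lam lw v B - Mmat lam lw v A =
      ∑ i ∈ B \ A, ((lw i : ℂ))⁻¹ • vecMulVec (v i) (star (v i)) := by
    rw [Mmat, Mmat, ← sum_sdiff hAB]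
    abel
  rw [le_iff, hdiff]
  exact posSemidef_sum_inv_smul_vecMulVec_self_star (fun i _ => (hlw i).le) v

theorem Kstar_antitone (hlam : ∀ j, 0 < lam j) (hlw : ∀ i, 0 < lw i) (v : Fin n → Fin k → ℂ)
    (H : Matrix (Fin m) (Fin n) ℂ) : Antitone (Kstar lam lw v H) := by
  intro A B hAB
  have hMinv := (Mmat_posDef hlam hlw v A).inv_le_inv_of_le (Mmat_mono hlw v hAB)
  simpa only [Kstar, Matrix.mul_assoc, ← conjTranspose_mul] using
    mul_mul_conjTranspose_le_mul_mul_conjTranspose hMinv (H * VKmat v)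

/-- The scalar set function `MSE(S) = trace K*(S)` is monotone
decreasing: for all `A ⊆ B`, `MSE(A) ≥ MSE(B)`. -/
theorem MSE_monotone_decreasing
    (n k m : ℕ)
    (v : Fin n → Fin k → ℂ)
    (H : Matrix (Fin m) (Fin n) ℂ)
    (lam : Fin k → ℝ) (hlam : ∀ j, 0 < lam j)
    (lw : Fin n → ℝ) (hlw : ∀ i, 0 < lw i)
    (A B : Finset (Fin n)) (hAB : A ⊆ B) :
    MSE lam lw v H B ≤ MSE lam lw v H A :=
  re_trace_le_re_trace (Kstar_antitone hlam hlw v H hAB)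
end

section
/- Telescoping bound for α-supermodular functions: let V be a finite set and f : 2^V → ℝ be monotone decreasing and α-supermodular with α > 0. Then for all subsets A, B ⊆ V, f(B) ≥ f(A) + α^{-1} · Σ_{s ∈ B \ A} ( f(A ∪ {s}) − f(A) ). -/
/-!
Adding the elements `s₁, …, sₖ` of `B \ A` to `A` one at a time, α-supermodularity bounds
the gain `f (A ∪ {sᵢ}) - f A` by `α` times the increment of `f` at step `i`; these increments
telescope to `f (A ∪ B) - f A`, and monotonicity gives `f (A ∪ B) ≤ f B`.
-/

open Finset

section

variable {V : Type*} [DecidableEq V]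

def IsAlphaSupermodular (α : ℝ) (f : Finset V → ℝ) : Prop :=
  ∀ A B : Finset V, A ⊆ B → ∀ u ∉ B, f (insert u A) - f A ≤ α * (f (insert u B) - f B)

theorem IsAlphaSupermodular.sum_marginal_le {α : ℝ} {f : Finset V → ℝ}
    (hf : IsAlphaSupermodular α f) (A : Finset V) {S : Finset V} (hS : Disjoint S A) :
    ∑ s ∈ S, (f (insert s A) - f A) ≤ α * (f (A ∪ S) - f A) := by
  induction S using Finset.induction_on with
  | empty => simp
  | @insert u S huS ih =>
    obtain ⟨huA, hSA⟩ := disjoint_insert_left.mp hS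
    have hstep : f (insert u A) - f A ≤ α * (f (insert u (A ∪ S)) - f (A ∪ S)) :=
      hf A (A ∪ S) subset_union_left u (by simp [huA, huS])
    calc ∑ s ∈ insert u S, (f (insert s A) - f A)
        = (f (insert u A) - f A) + ∑ s ∈ S, (f (insert s A) - f A) := sum_insert huS
      _ ≤ α * (f (insert u (A ∪ S)) - f (A ∪ S)) + α * (f (A ∪ S) - f A) :=
          add_le_add hstep (ih hSA)
      _ = α * (f (A ∪ insert u S) - f A) := by rw [union_insert]; ring

end

theorem alpha_supermodular_telescoping_bound_general
    {V : Type*} [DecidableEq V]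
    (f : Finset V → ℝ)
    (hmono : ∀ A B : Finset V, A ⊆ B → f B ≤ f A)
    (α : ℝ) (hα0 : 0 < α)
    (hsuper : ∀ A B : Finset V, A ⊆ B → ∀ u ∉ B,
      f (insert u A) - f A ≤ α * (f (insert u B) - f B))
    (A B : Finset V) :
    f A + α⁻¹ * ∑ s ∈ B \ A, (f (insert s A) - f A) ≤ f B := by
  have htelescope : ∑ s ∈ B \ A, (f (insert s A) - f A) ≤ α * (f (A ∪ B) - f A) := by
    simpa [union_sdiff_self_eq_union] using
      IsAlphaSupermodular.sum_marginal_le hsuper A sdiff_disjoint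
  have hgain : α⁻¹ * ∑ s ∈ B \ A, (f (insert s A) - f A) ≤ f (A ∪ B) - f A :=
    (inv_mul_le_iff₀ hα0).mpr htelescope
  linarith [hmono B (A ∪ B) subset_union_right]

/-- Telescoping bound for `α`-supermodular functions: if `f` is monotone
decreasing and `α`-supermodular with `α > 0`, then for all subsets `A, B`,
`f(B) ≥ f(A) + α⁻¹ ∑_{s ∈ B \ A} (f(A ∪ {s}) - f(A))`. -/
theorem alpha_supermodular_telescoping_bound
    {V : Type*} [Fintype V] [DecidableEq V]
    (f : Finset V → ℝ)
    (hmono : ∀ A B : Finset V, A ⊆ B → f B ≤ f A)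
    (α : ℝ) (hα0 : 0 < α)
    (hsuper : ∀ A B : Finset V, A ⊆ B → ∀ u ∉ B,
      f (insert u A) - f A ≤ α * (f (insert u B) - f B))
    (A B : Finset V) :
    f A + α⁻¹ * ∑ s ∈ B \ A, (f (insert s A) - f A) ≤ f B :=
  alpha_supermodular_telescoping_bound_general f hmono α hα0 hsuper A B
end

section
/- Per-step contraction of the greedy step: let V be a finite set, f : 2^V → ℝ be monotone decreasing and α-supermodular with α > 0, and let k ≥ 1 be an integer. Let G ⊆ V and u ∈ V \ G satisfy f(G ∪ {u}) ≤ f(G ∪ {s}) for every s ∈ V \ G. Then for every subset S ⊆ V with |S| ≤ k, f(G ∪ {u}) − f(S) ≤ (1 − α/k) · ( f(G) − f(S) ). -/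
/-!
Let `Δ = f(G ∪ {u}) - f(G) ≤ 0` be the greedy gain and `T = S \ G`. Adding the elements of `T`
to `G` one at a time, `α`-supermodularity bounds each marginal gain at `G` by `α` times the
corresponding marginal gain along the chain, which telescopes to
`∑_{s ∈ T} (f(G ∪ {s}) - f(G)) ≤ α (f(G ∪ S) - f(G)) ≤ α (f(S) - f(G))`.
By greedy choice every term on the left is at least `Δ`, and `Δ ≤ 0`, so
`k Δ ≤ |T| Δ ≤ α (f(S) - f(G))`; dividing by `k` and rearranging gives the contraction.
-/

open Finset

section

variable {V : Type*} [DecidableEq V] (f : Finset V → ℝ) {α : ℝ}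

theorem sum_marginal_le_of_supermodular
    (hsuper : ∀ A B : Finset V, A ⊆ B → ∀ u ∉ B,
      f (insert u A) - f A ≤ α * (f (insert u B) - f B))
    (G T : Finset V) (hTG : Disjoint T G) :
    ∑ s ∈ T, (f (insert s G) - f G) ≤ α * (f (G ∪ T) - f G) := by
  induction T using Finset.induction with
  | empty => simp
  | @insert a T haT ih =>
    obtain ⟨haG, hTG⟩ := disjoint_insert_left.mp hTG
    have hstep : f (insert a G) - f G ≤ α * (f (insert a (G ∪ T)) - f (G ∪ T)) :=
      hsuper G (G ∪ T) subset_union_left a (by simp [haG, haT])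
    rw [sum_insert haT, union_insert]
    linarith [ih hTG]

theorem card_mul_greedy_gain_le
    (hsuper : ∀ A B : Finset V, A ⊆ B → ∀ u ∉ B,
      f (insert u A) - f A ≤ α * (f (insert u B) - f B))
    (G : Finset V) (u : V) (hgreedy : ∀ s ∉ G, f (insert u G) ≤ f (insert s G))
    (T : Finset V) (hTG : Disjoint T G) :
    #T * (f (insert u G) - f G) ≤ α * (f (G ∪ T) - f G) := by
  have hterm : ∀ s ∈ T, f (insert u G) - f G ≤ f (insert s G) - f G := fun s hs =>
    sub_le_sub_right (hgreedy s (disjoint_left.mp hTG hs)) _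
  calc #T * (f (insert u G) - f G)
      = ∑ _s ∈ T, (f (insert u G) - f G) := by rw [sum_const, nsmul_eq_mul]
    _ ≤ ∑ s ∈ T, (f (insert s G) - f G) := sum_le_sum hterm
    _ ≤ α * (f (G ∪ T) - f G) := sum_marginal_le_of_supermodular f hsuper G T hTG

end

theorem greedy_step_contraction_general
    {V : Type*} [DecidableEq V]
    (f : Finset V → ℝ)
    (hmono : ∀ A B : Finset V, A ⊆ B → f B ≤ f A)
    (α : ℝ) (hα0 : 0 < α)
    (hsuper : ∀ A B : Finset V, A ⊆ B → ∀ u ∉ B,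
      f (insert u A) - f A ≤ α * (f (insert u B) - f B))
    (k : ℕ) (hk : 1 ≤ k)
    (G : Finset V) (u : V)
    (hgreedy : ∀ s ∉ G, f (insert u G) ≤ f (insert s G))
    (S : Finset V) (hScard : S.card ≤ k) :
    f (insert u G) - f S ≤ (1 - α / k) * (f G - f S) := by
  have hk0 : (0 : ℝ) < k := by exact_mod_cast hk
  have hgain : f (insert u G) - f G ≤ 0 := sub_nonpos.mpr (hmono _ _ (subset_insert u G))
  have hcard : (#(S \ G) : ℝ) ≤ k := by exact_mod_cast (card_le_card sdiff_subset).trans hScard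
  have hkey : k * (f (insert u G) - f G) ≤ α * (f S - f G) :=
    calc k * (f (insert u G) - f G)
        ≤ #(S \ G) * (f (insert u G) - f G) := mul_le_mul_of_nonpos_right hcard hgain
      _ ≤ α * (f (G ∪ S) - f G) := by
        simpa only [union_sdiff_self_eq_union] using
          card_mul_greedy_gain_le f hsuper G u hgreedy (S \ G) sdiff_disjoint
      _ ≤ α * (f S - f G) := by
        gcongr
        exact hmono S (G ∪ S) subset_union_right
  have hdiv : f (insert u G) - f G ≤ α / k * (f S - f G) := by
    rw [div_mul_eq_mul_div, le_div_iff₀ hk0]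
    linarith
  linarith

/-- Per-step contraction of the greedy step: if `f` is monotone
decreasing and `α`-supermodular with `α > 0`, `k ≥ 1`, and `u ∉ G` is a greedy choice at
`G`, then for every `S` with `|S| ≤ k`,
`f(G ∪ {u}) - f(S) ≤ (1 - α/k) (f(G) - f(S))`. -/
theorem greedy_step_contraction
    {V : Type*} [Fintype V] [DecidableEq V]
    (f : Finset V → ℝ)
    (hmono : ∀ A B : Finset V, A ⊆ B → f B ≤ f A)
    (α : ℝ) (hα0 : 0 < α)
    (hsuper : ∀ A B : Finset V, A ⊆ B → ∀ u ∉ B,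
      f (insert u A) - f A ≤ α * (f (insert u B) - f B))
    (k : ℕ) (hk : 1 ≤ k)
    (G : Finset V) (u : V) (hu : u ∉ G)
    (hgreedy : ∀ s ∉ G, f (insert u G) ≤ f (insert s G))
    (S : Finset V) (hScard : S.card ≤ k) :
    f (insert u G) - f S ≤ (1 - α / k) * (f G - f S) :=
  greedy_step_contraction_general f hmono α hα0 hsuper k hk G u hgreedy S hScard
end
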